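/- Let B > 0, let D = 1/(2B) be the reference (critical square) waveguide length, and let D_h = 1/(3B) be the critical waveguide length of the hexagonal mesh. Let (u, v) ∈ ℝ² with u² + v² = 1, and define b̃_h(ξ_x, ξ_y) = (8/9)·[cos(2π√3·D_h·ξ_x) + cos(2πD_h·((√3/2)·ξ_x + (3/2)·ξ_y)) + cos(2πD_h·((√3/2)·ξ_x − (3/2)·ξ_y))] − 2/3. Then the function t ↦ (1/(4πD·t))·arctan(√(4 − b̃_h(t·u, t·v)²)/b̃_h(t·u, t·v)) tends to √2/3 as t → 0⁺; that is, under critical sampling the dc dispersion ratio of the hexagonal waveguide mesh is k̃_h(0) = √2/3. -/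

import Mathlib

/-!
Along a ray `t ↦ (t u, t v)` the geometric factor of the hexagonal mesh satisfies
`2 - b̃_h = 8 π² D_h² t² + o(t²)`, since each cosine contributes `(c t)² / 2` and the three
wave vectors of the hexagonal stencil have squared lengths summing to `18 π² D_h² (u² + v²)`.
Then `√(4 - b̃_h²) / b̃_h = √((2 - b̃_h)(2 + b̃_h)) / b̃_h ≈ √(8 π² D_h²) t`, and `arctan x ~ x`
at `0`, so the dispersion ratio tends to `2 √2 π D_h / (4 π D) = √2 / 3`.
-/

open Real Filter Topology Asymptotics

namespace Real

lemma mul_sinc (x : ℝ) : x * sinc x = sin x := by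
  rcases eq_or_ne x 0 with rfl | hx
  · simp
  · rw [sinc_of_ne_zero hx]
    field_simp

lemma one_sub_cos_eq_mul_sinc_sq (x : ℝ) : 1 - cos x = x ^ 2 / 2 * sinc (x / 2) ^ 2 := by
  have h := cos_two_mul_eq_one_sub (x / 2)
  rw [mul_div_cancel₀ x two_ne_zero, ← mul_sinc (x / 2)] at h
  rw [h]
  ring

lemma tendsto_one_sub_cos_mul_div_sq (c : ℝ) :
    Tendsto (fun t => (1 - cos (c * t)) / t ^ 2) (𝓝[≠] 0) (𝓝 (c ^ 2 / 2)) := by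
  have hcont : Tendsto (fun t => c ^ 2 / 2 * sinc (c * t / 2) ^ 2) (𝓝 0) (𝓝 (c ^ 2 / 2)) := by
    simpa [sinc_zero] using
      ((continuous_sinc.comp (continuous_const.mul continuous_id |>.div_const 2)).pow 2
        |>.const_mul (c ^ 2 / 2)).tendsto 0
  refine (hcont.mono_left nhdsWithin_le_nhds).congr' ?_
  filter_upwards [self_mem_nhdsWithin] with t (ht : t ≠ 0)
  rw [one_sub_cos_eq_mul_sinc_sq]
  field_simp

lemma arctan_isEquivalent_id : arctan ~[𝓝 0] id := by
  have h := (hasDerivAt_arctan 0).isLittleO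
  simp only [arctan_zero, sub_zero, zero_pow two_ne_zero, add_zero, div_one, smul_eq_mul,
    mul_one] at h
  exact h

end Real

lemma tendsto_arctan_sqrt_div_div_of_tendsto_two_sub_div_sq {g : ℝ → ℝ} {κ : ℝ}
    (hg : Tendsto (fun t => (2 - g t) / t ^ 2) (𝓝[>] 0) (𝓝 κ)) :
    Tendsto (fun t => arctan (√(4 - g t ^ 2) / g t) / t) (𝓝[>] 0) (𝓝 √κ) := by
  have hid : Tendsto (fun t : ℝ => t) (𝓝[>] 0) (𝓝 0) :=
    tendsto_nhdsWithin_of_tendsto_nhds tendsto_id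
  have hg2 : Tendsto g (𝓝[>] 0) (𝓝 2) := by
    have h := tendsto_const_nhds (x := (2 : ℝ)) |>.sub (hg.mul (hid.pow 2))
    rw [zero_pow two_ne_zero, mul_zero, sub_zero] at h
    refine h.congr' ?_
    filter_upwards [self_mem_nhdsWithin] with t (ht : 0 < t)
    field_simp
    ring
  set X := fun t => √(4 - g t ^ 2) / g t
  have hXt : Tendsto (fun t => X t / t) (𝓝[>] 0) (𝓝 √κ) := by
    have h := ((hg.mul (hg2.const_add 2)).sqrt).div hg2 two_ne_zero
    rw [show (2 : ℝ) + 2 = 2 ^ 2 by norm_num, sqrt_mul' κ (sq_nonneg 2), sqrt_sq zero_le_two,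
      mul_div_cancel_right₀ _ two_ne_zero] at h
    refine h.congr' ?_
    filter_upwards [self_mem_nhdsWithin] with t (ht : 0 < t)
    rw [Pi.div_apply, div_mul_eq_mul_div, show (2 - g t) * (2 + g t) = 4 - g t ^ 2 by ring,
      sqrt_div' _ (sq_nonneg t), sqrt_sq ht.le, div_right_comm]
  have hX : Tendsto X (𝓝[>] 0) (𝓝 0) := by
    have h := hXt.mul hid
    rw [mul_zero] at h
    refine h.congr' ?_
    filter_upwards [self_mem_nhdsWithin] with t (ht : 0 < t)
    field_simp
  have hequiv : (fun t => arctan (X t) / t) ~[𝓝[>] 0] fun t => X t / t :=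
    (arctan_isEquivalent_id.comp_tendsto hX).div IsEquivalent.refl
  exact hequiv.symm.tendsto_nhds hXt

/-- The geometric factor `b̃_h` of the hexagonal mesh with waveguide length `Dh`. -/
noncomputable def hexGeometricFactor (Dh ξx ξy : ℝ) : ℝ :=
  (8 / 9) * (cos (2 * π * √3 * Dh * ξx) + cos (2 * π * Dh * (√3 / 2 * ξx + 3 / 2 * ξy)) +
    cos (2 * π * Dh * (√3 / 2 * ξx - 3 / 2 * ξy))) - 2 / 3

lemma tendsto_two_sub_hexGeometricFactor_div_sq (Dh u v : ℝ) :
    Tendsto (fun t => (2 - hexGeometricFactor Dh (t * u) (t * v)) / t ^ 2) (𝓝[≠] 0)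
      (𝓝 (8 * π ^ 2 * Dh ^ 2 * (u ^ 2 + v ^ 2))) := by
  set c₁ := 2 * π * √3 * Dh * u
  set c₂ := 2 * π * Dh * (√3 / 2 * u + 3 / 2 * v)
  set c₃ := 2 * π * Dh * (√3 / 2 * u - 3 / 2 * v)
  have h := ((tendsto_one_sub_cos_mul_div_sq c₁).add (tendsto_one_sub_cos_mul_div_sq c₂)
    |>.add (tendsto_one_sub_cos_mul_div_sq c₃)).const_mul (8 / 9)
  have hsum : 8 / 9 * (c₁ ^ 2 / 2 + c₂ ^ 2 / 2 + c₃ ^ 2 / 2) =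
      8 * π ^ 2 * Dh ^ 2 * (u ^ 2 + v ^ 2) := by
    linear_combination (8 / 3 * π ^ 2 * Dh ^ 2 * u ^ 2) * sq_sqrt (zero_le_three (α := ℝ))
  rw [hsum] at h
  convert h using 2 with t
  simp only [hexGeometricFactor, c₁, c₂, c₃]
  ring_nf

/-- Under critical sampling of a signal with circular spatial band of radius `B`
(reference square length `D = 1/(2B)`, hexagonal critical length `D_h = 1/(3B)`),
the dc dispersion ratio of the hexagonal waveguide mesh (with `α_h = 2`) is
`k̃_h(0) = √2/3`: along any unit direction `(u, v)`, the corrected dispersion ratio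
tends to `√2/3` as the spatial frequency tends to `0⁺`. -/
theorem stmt19 (B u v : ℝ) (hB : 0 < B) (huv : u ^ 2 + v ^ 2 = 1)
    (D Dh : ℝ) (hD : D = 1 / (2 * B)) (hDh : Dh = 1 / (3 * B))
    (b : ℝ → ℝ → ℝ)
    (hb : ∀ ξx ξy, b ξx ξy = (8 / 9) * (Real.cos (2 * π * Real.sqrt 3 * Dh * ξx) +
      Real.cos (2 * π * Dh * (Real.sqrt 3 / 2 * ξx + 3 / 2 * ξy)) +
      Real.cos (2 * π * Dh * (Real.sqrt 3 / 2 * ξx - 3 / 2 * ξy))) - 2 / 3) :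
    Filter.Tendsto (fun t : ℝ => (1 / (4 * π * D * t)) *
        Real.arctan (Real.sqrt (4 - (b (t * u) (t * v)) ^ 2) / b (t * u) (t * v)))
      (nhdsWithin 0 (Set.Ioi 0)) (nhds (Real.sqrt 2 / 3)) := by
  obtain rfl : b = hexGeometricFactor Dh := funext₂ hb
  have hdisp := tendsto_arctan_sqrt_div_div_of_tendsto_two_sub_div_sq
    ((tendsto_two_sub_hexGeometricFactor_div_sq Dh u v).mono_left (nhdsGT_le_nhdsNE 0))
  have hval : 1 / (4 * π * D) * √(8 * π ^ 2 * Dh ^ 2 * (u ^ 2 + v ^ 2)) = √2 / 3 := by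
    rw [huv, show 8 * π ^ 2 * Dh ^ 2 * 1 = (2 * π * Dh) ^ 2 * 2 by ring,
      sqrt_mul (sq_nonneg _), sqrt_sq (by rw [hDh]; positivity), hD, hDh]
    field_simp
    ring
  rw [← hval]
  convert hdisp.const_mul (1 / (4 * π * D)) using 2 with t
  ring
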